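/- arXiv:2112.04591 — 8 statements merged into one kernel-verified Lean document; each statement's English description precedes it below -/
import Mathlib

section
/- If u₁ and u₂ are minimizers of D_α with optimality conditions F*(Fuᵢ − v) + α pᵢ = 0, pᵢ ∈ ∂J(uᵢ), then ‖F(u₁ − u₂)‖² + α⟨p₁ − p₂, u₁ − u₂⟩ = 0, and hence the symmetric Bregman distance ⟨p₁ − p₂, u₁ − u₂⟩ vanishes. -/
open scoped RealInnerProductSpace

/-- Convexity for an extended-real-valued functional. -/
def ConvexFn {U : Type*} [AddCommGroup U] [Module ℝ U] (J : U → EReal) : Prop :=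
  ∀ u w : U, ∀ t : ℝ, 0 ≤ t → t ≤ 1 →
    J (t • u + (1 - t) • w) ≤ ((t : ℝ) : EReal) * J u + ((1 - t : ℝ) : EReal) * J w

/-- Properness: not identically `+∞` and nowhere `-∞`. -/
def ProperFn {U : Type*} (J : U → EReal) : Prop :=
  (∃ w, J w ≠ ⊤) ∧ (∀ w, J w ≠ ⊥)

/-- `p` is a subgradient of `J` at `u`. -/
def IsSubgrad {U : Type*} [NormedAddCommGroup U] [InnerProductSpace ℝ U]
    (J : U → EReal) (u p : U) : Prop :=
  ∀ w : U, J u + ((⟪p, w - u⟫ : ℝ) : EReal) ≤ J w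

/-- One-sided Bregman distance `d_J^p(w, u)`. -/
noncomputable def bregman {U : Type*} [NormedAddCommGroup U] [InnerProductSpace ℝ U]
    (J : U → EReal) (p u w : U) : EReal :=
  J w - J u - ((⟪p, w - u⟫ : ℝ) : EReal)

lemma subgrad_ne_top {U : Type*} [NormedAddCommGroup U] [InnerProductSpace ℝ U]
    {J : U → EReal} (hproper : ProperFn J) {u p : U} (hp : IsSubgrad J u p) :
    J u ≠ ⊤ := by
  obtain ⟨w, hw⟩ := hproper.1
  intro h
  have := hp w
  rw [h] at this
  have : (⊤ : EReal) ≤ J w := by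
    simpa using this
  exact hw (top_le_iff.mp this)

theorem stmt3 {U V : Type*} [NormedAddCommGroup U] [InnerProductSpace ℝ U] [CompleteSpace U]
    [NormedAddCommGroup V] [InnerProductSpace ℝ V] [CompleteSpace V]
    (F : U →L[ℝ] V) (J : U → EReal) (hconv : ConvexFn J) (hproper : ProperFn J)
    (v : V) (α : ℝ) (hα : 0 < α)
    (u₁ u₂ p₁ p₂ : U)
    (hp₁ : IsSubgrad J u₁ p₁) (hp₂ : IsSubgrad J u₂ p₂)
    (hopt₁ : (ContinuousLinearMap.adjoint F) (F u₁ - v) + α • p₁ = 0)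
    (hopt₂ : (ContinuousLinearMap.adjoint F) (F u₂ - v) + α • p₂ = 0) :
    ‖F (u₁ - u₂)‖ ^ 2 + α * ⟪p₁ - p₂, u₁ - u₂⟫ = 0 ∧
      ⟪p₁ - p₂, u₁ - u₂⟫ = 0 := by
  -- finiteness of J u₁, J u₂
  obtain ⟨a₁, ha₁⟩ : ∃ a : ℝ, J u₁ = (a : EReal) := by
    lift J u₁ to ℝ using ⟨subgrad_ne_top hproper hp₁, hproper.2 u₁⟩ with a
    exact ⟨a, rfl⟩
  obtain ⟨a₂, ha₂⟩ : ∃ a : ℝ, J u₂ = (a : EReal) := by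
    lift J u₂ to ℝ using ⟨subgrad_ne_top hproper hp₂, hproper.2 u₂⟩ with a
    exact ⟨a, rfl⟩
  -- monotonicity of subgradients
  have h12 : a₁ + ⟪p₁, u₂ - u₁⟫ ≤ a₂ := by
    have := hp₁ u₂
    rw [ha₁, ha₂, ← EReal.coe_add] at this
    exact_mod_cast this
  have h21 : a₂ + ⟪p₂, u₁ - u₂⟫ ≤ a₁ := by
    have := hp₂ u₁
    rw [ha₂, ha₁, ← EReal.coe_add] at this
    exact_mod_cast this
  have hmono : 0 ≤ ⟪p₁ - p₂, u₁ - u₂⟫ := by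
    have e1 : ⟪p₁, u₂ - u₁⟫ = -⟪p₁, u₁ - u₂⟫ := by
      rw [← inner_neg_right]; congr 1; abel
    have e2 : ⟪p₁ - p₂, u₁ - u₂⟫ = ⟪p₁, u₁ - u₂⟫ - ⟪p₂, u₁ - u₂⟫ := by
      rw [inner_sub_left]
    linarith
  -- optimality difference
  have hA : (ContinuousLinearMap.adjoint F) (F (u₁ - u₂)) = -(α • (p₁ - p₂)) := by
    have h1 : (ContinuousLinearMap.adjoint F) (F u₁ - v) = -(α • p₁) :=
      eq_neg_of_add_eq_zero_left hopt₁
    have h2 : (ContinuousLinearMap.adjoint F) (F u₂ - v) = -(α • p₂) :=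
      eq_neg_of_add_eq_zero_left hopt₂
    have hF : F (u₁ - u₂) = (F u₁ - v) - (F u₂ - v) := by rw [map_sub]; abel
    rw [hF, map_sub, h1, h2, smul_sub]
    abel
  have hkey : ‖F (u₁ - u₂)‖ ^ 2 = -(α * ⟪p₁ - p₂, u₁ - u₂⟫) := by
    have : ‖F (u₁ - u₂)‖ ^ 2 = ⟪(ContinuousLinearMap.adjoint F) (F (u₁ - u₂)), u₁ - u₂⟫ := by
      rw [ContinuousLinearMap.adjoint_inner_left, real_inner_self_eq_norm_sq]
    rw [this, hA, inner_neg_left, real_inner_smul_left]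
  have hnn : 0 ≤ ‖F (u₁ - u₂)‖ ^ 2 := sq_nonneg _
  constructor
  · linarith
  · nlinarith
end

section
/- Stability estimate in Bregman distance: let u_α minimize ½‖Fu − v‖² + αJ(u) and ũ_α minimize ½‖Fu − ṽ‖² + αJ(u), with subgradients p_α, p̃_α from the respective optimality conditions F*(Fu_α − v) + α p_α = 0 and F*(Fũ_α − ṽ) + α p̃_α = 0. Then ½‖Fu_α − Fũ_α‖² + α⟨p_α − p̃_α, u_α − ũ_α⟩ ≤ ½‖v − ṽ‖². -/
open scoped RealInnerProductSpace

theorem stmt4 {U V : Type*} [NormedAddCommGroup U] [InnerProductSpace ℝ U] [CompleteSpace U]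
    [NormedAddCommGroup V] [InnerProductSpace ℝ V] [CompleteSpace V]
    (F : U →L[ℝ] V) (J : U → EReal) (hconv : ConvexFn J) (hproper : ProperFn J)
    (v v' : V) (α : ℝ) (hα : 0 < α)
    (uα uα' pα pα' : U)
    (hp : IsSubgrad J uα pα) (hp' : IsSubgrad J uα' pα')
    (hopt : (ContinuousLinearMap.adjoint F) (F uα - v) + α • pα = 0)
    (hopt' : (ContinuousLinearMap.adjoint F) (F uα' - v') + α • pα' = 0) :
    (1/2) * ‖F uα - F uα'‖ ^ 2 + α * ⟪pα - pα', uα - uα'⟫ ≤ (1/2) * ‖v - v'‖ ^ 2 := by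
  set A := ContinuousLinearMap.adjoint F
  have h1 : α • pα = A (v - F uα) := by
    have : α • pα = -(A (F uα - v)) := by
      exact eq_neg_of_add_eq_zero_right hopt
    rw [this, ← map_neg, neg_sub]
  have h1' : α • pα' = A (v' - F uα') := by
    have : α • pα' = -(A (F uα' - v')) := by
      exact eq_neg_of_add_eq_zero_right hopt'
    rw [this, ← map_neg, neg_sub]
  have key : α * ⟪pα - pα', uα - uα'⟫ =
      ⟪(v - v') - (F uα - F uα'), F uα - F uα'⟫ := by
    have : α * ⟪pα - pα', uα - uα'⟫ = ⟪α • (pα - pα'), uα - uα'⟫ := by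
      rw [real_inner_smul_left]
    rw [this, smul_sub, h1, h1', ← map_sub,
      ContinuousLinearMap.adjoint_inner_left]
    congr 1
    · abel
    · rw [map_sub]
  rw [key]
  have hsq : (0:ℝ) ≤ ‖(v - v') - (F uα - F uα')‖ ^ 2 := sq_nonneg _
  rw [@norm_sub_sq_real] at hsq
  rw [inner_sub_left, real_inner_self_eq_norm_sq]
  nlinarith [hsq, real_inner_comm (v - v') (F uα - F uα')]
end

section
/- Error estimate under the source condition: let u_α minimize ½‖Fu − v‖² + αJ(u), α > 0, and suppose u* satisfies Fu* = v* and the source condition p* = F*z* ∈ ∂J(u*) for some z* ∈ V. Then ½‖Fu_α − Fu*‖² + α d_J^{p_α,p*}(u_α,u*) ≤ ‖v − v*‖² + α²‖z*‖², where p_α is the subgradient from the optimality condition of u_α and d_J^{p_α,p*} is the symmetric Bregman distance. -/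
open scoped RealInnerProductSpace

lemma aux_ineq {V : Type*} [NormedAddCommGroup V] [InnerProductSpace ℝ V]
    (e d z : V) (α : ℝ) :
    (1/2) * ‖e‖ ^ 2 + (-⟪e - d, e⟫ - α * ⟪z, e⟫) ≤ ‖d‖ ^ 2 + α ^ 2 * ‖z‖ ^ 2 := by
  have h1 : (0:ℝ) ≤ ⟪e - (d - α • z), e - (d - α • z)⟫ := real_inner_self_nonneg
  have h2 : (0:ℝ) ≤ ⟪d + α • z, d + α • z⟫ := real_inner_self_nonneg
  have he : ⟪e, e⟫ = ‖e‖ ^ 2 := real_inner_self_eq_norm_sq e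
  have hd : ⟪d, d⟫ = ‖d‖ ^ 2 := real_inner_self_eq_norm_sq d
  have hz : ⟪z, z⟫ = ‖z‖ ^ 2 := real_inner_self_eq_norm_sq z
  simp only [inner_sub_left, inner_sub_right, inner_add_left, inner_add_right,
    real_inner_smul_left, real_inner_smul_right] at h1 h2 ⊢
  simp only [real_inner_comm e d, real_inner_comm e z, real_inner_comm d z] at h1 h2 ⊢
  nlinarith [h1, h2, he, hd, hz]

theorem stmt5 {U V : Type*} [NormedAddCommGroup U] [InnerProductSpace ℝ U] [CompleteSpace U]
    [NormedAddCommGroup V] [InnerProductSpace ℝ V] [CompleteSpace V]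
    (F : U →L[ℝ] V) (J : U → EReal) (hconv : ConvexFn J) (hproper : ProperFn J)
    (v vs : V) (α : ℝ) (hα : 0 < α)
    (uα pα us : U) (zs : V)
    (hp : IsSubgrad J uα pα)
    (hopt : (ContinuousLinearMap.adjoint F) (F uα - v) + α • pα = 0)
    (hsrc : IsSubgrad J us ((ContinuousLinearMap.adjoint F) zs))
    (hdata : F us = vs) :
    (1/2) * ‖F uα - F us‖ ^ 2 +
        α * ⟪pα - (ContinuousLinearMap.adjoint F) zs, uα - us⟫ ≤
      ‖v - vs‖ ^ 2 + α ^ 2 * ‖zs‖ ^ 2 := by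
  have hopt' : α • pα = -((ContinuousLinearMap.adjoint F) (F uα - v)) := by
    linear_combination (norm := abel) hopt
  have h1 : α * ⟪pα, uα - us⟫ = -⟪F uα - v, F uα - F us⟫ := by
    rw [← real_inner_smul_left, hopt', inner_neg_left,
      ContinuousLinearMap.adjoint_inner_left, map_sub]
  have h2 : ⟪(ContinuousLinearMap.adjoint F) zs, uα - us⟫ = ⟪zs, F uα - F us⟫ := by
    rw [ContinuousLinearMap.adjoint_inner_left, map_sub]
  have key : α * ⟪pα - (ContinuousLinearMap.adjoint F) zs, uα - us⟫
      = -⟪(F uα - F us) - (v - vs), F uα - F us⟫ - α * ⟪zs, F uα - F us⟫ := by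
    rw [inner_sub_left, mul_sub, h1, h2]
    have : (F uα - F us) - (v - vs) = F uα - v := by rw [hdata]; abel
    rw [this]
  rw [key]
  exact aux_ineq (F uα - F us) (v - vs) zs α
end

section
/- Under the source condition p* = F*z* ∈ ∂J(u*) with Fu* = v*, the Bregman-distance error satisfies d_J^{p_α,p*}(u_α,u*) ≤ ‖v − v*‖²/α + α‖z*‖², so that if the noise level δₙ = ‖vₙ − v*‖ → 0 and αₙ is chosen with αₙ → 0 and δₙ²/αₙ → 0, then the Bregman distance of the regularized solutions to u* tends to 0. -/
open scoped RealInnerProductSpace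

open Filter in
theorem stmt6 {U V : Type*} [NormedAddCommGroup U] [InnerProductSpace ℝ U] [CompleteSpace U]
    [NormedAddCommGroup V] [InnerProductSpace ℝ V] [CompleteSpace V]
    (F : U →L[ℝ] V) (J : U → EReal) (hconv : ConvexFn J) (hproper : ProperFn J)
    (vs : V) (us : U) (zs : V)
    (hsrc : IsSubgrad J us ((ContinuousLinearMap.adjoint F) zs))
    (hdata : F us = vs)
    (v : ℕ → V) (α : ℕ → ℝ) (u p : ℕ → U)
    (hα : ∀ n, 0 < α n)
    (hp : ∀ n, IsSubgrad J (u n) (p n))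
    (hopt : ∀ n, (ContinuousLinearMap.adjoint F) (F (u n) - v n) + α n • p n = 0)
    (hαto0 : Tendsto α atTop (nhds 0))
    (hrate : Tendsto (fun n => ‖v n - vs‖ ^ 2 / α n) atTop (nhds 0)) :
    (∀ n, ⟪p n - (ContinuousLinearMap.adjoint F) zs, u n - us⟫ ≤
        ‖v n - vs‖ ^ 2 / α n + α n * ‖zs‖ ^ 2) ∧
      Tendsto (fun n => ⟪p n - (ContinuousLinearMap.adjoint F) zs, u n - us⟫)
        atTop (nhds 0) := by

  classical
  -- Finiteness of J at points with a subgradient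
  obtain ⟨⟨w0, hw0⟩, hbot⟩ := hproper
  have hfin : ∀ x px : U, IsSubgrad J x px → ∃ r : ℝ, J x = (r : EReal) := by
    intro x px h
    have h1 := h w0
    have hne : J x ≠ ⊤ := by
      intro htop
      rw [htop, EReal.top_add_of_ne_bot (EReal.coe_ne_bot _)] at h1
      exact hw0 (top_le_iff.mp h1)
    exact ⟨(J x).toReal, (EReal.coe_toReal hne (hbot x)).symm⟩
  obtain ⟨b, hb⟩ := hfin us _ hsrc
  -- Nonnegativity of the symmetric Bregman distance
  have hnonneg : ∀ n, 0 ≤ ⟪p n - (ContinuousLinearMap.adjoint F) zs, u n - us⟫ := by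
    intro n
    obtain ⟨a, ha⟩ := hfin (u n) _ (hp n)
    have h1 := (hp n) us
    have h2 := hsrc (u n)
    rw [ha, hb, ← EReal.coe_add, EReal.coe_le_coe_iff] at h1
    rw [ha, hb, ← EReal.coe_add, EReal.coe_le_coe_iff] at h2
    have e1 : ⟪p n, us - u n⟫ = -⟪p n, u n - us⟫ := by
      rw [← inner_neg_right]; congr 1; abel
    rw [inner_sub_left]
    linarith [h1, h2, e1 ▸ h1]
  -- The quantitative bound
  have key : ∀ n, ⟪p n - (ContinuousLinearMap.adjoint F) zs, u n - us⟫ ≤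
      ‖v n - vs‖ ^ 2 / α n + α n * ‖zs‖ ^ 2 := by
    intro n
    set r := F (u n) - v n with hr
    set d := v n - vs with hd
    have hFe : F (u n - us) = r + d := by
      rw [map_sub, hdata, hr, hd]; abel
    have hαp : (α n) • p n = -((ContinuousLinearMap.adjoint F) r) := by
      have := hopt n
      rw [add_comm] at this
      linear_combination (norm := module) this
    have hmain : α n * ⟪p n - (ContinuousLinearMap.adjoint F) zs, u n - us⟫ =
        -(‖r‖ ^ 2 + ⟪r, d⟫ + α n * ⟪zs, r⟫ + α n * ⟪zs, d⟫) := by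
      have e1 : α n * ⟪p n - (ContinuousLinearMap.adjoint F) zs, u n - us⟫ =
          ⟪(α n) • p n, u n - us⟫ - α n * ⟪(ContinuousLinearMap.adjoint F) zs, u n - us⟫ := by
        rw [inner_sub_left, real_inner_smul_left]; ring
      rw [e1, hαp, inner_neg_left, ContinuousLinearMap.adjoint_inner_left,
        ContinuousLinearMap.adjoint_inner_left, hFe, inner_add_right, inner_add_right,
        real_inner_self_eq_norm_sq]
      ring
    have hcs1 : |⟪r, d⟫| ≤ ‖r‖ * ‖d‖ := abs_real_inner_le_norm r d
    have hcs2 : |⟪zs, r⟫| ≤ ‖zs‖ * ‖r‖ := abs_real_inner_le_norm zs r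
    have hcs3 : |⟪zs, d⟫| ≤ ‖zs‖ * ‖d‖ := abs_real_inner_le_norm zs d
    have hαn := hα n
    have hbound : α n * ⟪p n - (ContinuousLinearMap.adjoint F) zs, u n - us⟫ ≤
        ‖d‖ ^ 2 + (α n) ^ 2 * ‖zs‖ ^ 2 := by
      rw [hmain]
      have h1 : -⟪r, d⟫ ≤ ‖r‖ * ‖d‖ := by
        have := abs_le.mp hcs1; linarith
      have h2 : -⟪zs, r⟫ ≤ ‖zs‖ * ‖r‖ := by
        have := abs_le.mp hcs2; linarith
      have h3 : -⟪zs, d⟫ ≤ ‖zs‖ * ‖d‖ := by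
        have := abs_le.mp hcs3; linarith
      nlinarith [norm_nonneg r, norm_nonneg d, norm_nonneg zs, hαn.le,
        sq_nonneg (‖d‖ - α n * ‖zs‖), sq_nonneg (α n * ‖zs‖ - ‖r‖), sq_nonneg (‖r‖ - ‖d‖),
        mul_nonneg hαn.le (mul_nonneg (norm_nonneg zs) (norm_nonneg r)),
        mul_nonneg hαn.le (mul_nonneg (norm_nonneg zs) (norm_nonneg d))]
    have : ⟪p n - (ContinuousLinearMap.adjoint F) zs, u n - us⟫ ≤
        (‖d‖ ^ 2 + (α n) ^ 2 * ‖zs‖ ^ 2) / α n := by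
      rw [le_div_iff₀ hαn]
      linarith [hbound]
    calc ⟪p n - (ContinuousLinearMap.adjoint F) zs, u n - us⟫
        ≤ (‖d‖ ^ 2 + (α n) ^ 2 * ‖zs‖ ^ 2) / α n := this
      _ = ‖v n - vs‖ ^ 2 / α n + α n * ‖zs‖ ^ 2 := by
          rw [← hd]; field_simp
  refine ⟨key, ?_⟩
  have hg : Filter.Tendsto (fun n => ‖v n - vs‖ ^ 2 / α n + α n * ‖zs‖ ^ 2)
      Filter.atTop (nhds 0) := by
    have := hrate.add (hαto0.mul_const (‖zs‖ ^ 2))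
    simpa using this
  exact squeeze_zero hnonneg key hg
end

section
/- An element u* with v* = Fu* satisfies the range condition for the variational regularization operator Φ_α (i.e. for every α > 0 there exists v*_α with u* ∈ argmin_u ½‖Fu − v*_α‖² + αJ(u)) if and only if u* satisfies the source condition: there exists z* ∈ V with F*z* ∈ ∂J(u*). In the forward direction, v*_α = v* + αz* works. -/
open scoped RealInnerProductSpace

theorem stmt7 {U V : Type*} [NormedAddCommGroup U] [InnerProductSpace ℝ U] [CompleteSpace U]
    [NormedAddCommGroup V] [InnerProductSpace ℝ V] [CompleteSpace V]
    (F : U →L[ℝ] V) (J : U → EReal) (hconv : ConvexFn J) (hproper : ProperFn J)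
    (us : U) (vs : V) (hdata : F us = vs)
    (Dα : ℝ → V → U → EReal)
    (hDα : ∀ α w u,
      Dα α w u = (((1/2) * ‖F u - w‖ ^ 2 : ℝ) : EReal) + ((α : ℝ) : EReal) * J u) :
    ((∀ α : ℝ, 0 < α → ∃ vα : V, ∀ u : U, Dα α vα us ≤ Dα α vα u) ↔
        (∃ zs : V, IsSubgrad J us ((ContinuousLinearMap.adjoint F) zs))) ∧
      (∀ zs : V, IsSubgrad J us ((ContinuousLinearMap.adjoint F) zs) →
        ∀ α : ℝ, 0 < α → ∀ u : U, Dα α (vs + α • zs) us ≤ Dα α (vs + α • zs) u) := by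
  obtain ⟨w0, hw0⟩ := hproper.1
  have hbot := hproper.2
  -- The backward/construction part
  have key : ∀ zs : V, IsSubgrad J us ((ContinuousLinearMap.adjoint F) zs) →
      ∀ α : ℝ, 0 < α → ∀ u : U, Dα α (vs + α • zs) us ≤ Dα α (vs + α • zs) u := by
    intro z hz α hα u
    -- J us is finite
    have hfin : J us ≠ ⊤ := by
      intro h
      have h2 := hz w0
      rw [h, EReal.top_add_coe] at h2
      exact hw0 (top_le_iff.mp h2)
    set a : ℝ := (J us).toReal with ha'
    have ha : J us = (a : EReal) := (EReal.coe_toReal hfin (hbot us)).symm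
    rw [hDα, hDα]
    by_cases hu : J u = ⊤
    · rw [hu, EReal.coe_mul_top_of_pos hα, EReal.coe_add_top]
      exact le_top
    set b : ℝ := (J u).toReal with hb'
    have hb : J u = (b : EReal) := (EReal.coe_toReal hu (hbot u)).symm
    have h2 := hz u
    rw [ha, hb] at h2 ⊢
    norm_cast at h2 ⊢
    -- real computation
    have e1 : F us - (vs + α • z) = -(α • z) := by rw [hdata]; abel
    have e2 : F u - (vs + α • z) = (F u - vs) - α • z := by abel
    rw [e1, e2, norm_neg, norm_sub_sq_real, norm_smul, real_inner_smul_right]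
    have e3 : ⟪F u - vs, z⟫ = ⟪(ContinuousLinearMap.adjoint F) z, u - us⟫ := by
      rw [ContinuousLinearMap.adjoint_inner_left, map_sub, hdata, real_inner_comm]
    rw [e3]
    rw [Real.norm_eq_abs]
    nlinarith [sq_nonneg ‖F u - vs‖, mul_le_mul_of_nonneg_left h2 hα.le, sq_abs α]
  refine ⟨⟨?_, fun ⟨z, hz⟩ α hα => ⟨vs + α • z, key z hz α hα⟩⟩, key⟩
  -- forward direction: range condition → source condition
  intro h
  obtain ⟨vα, hv⟩ := h 1 one_pos
  -- J us is finite
  have hfin : J us ≠ ⊤ := by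
    intro hus
    have h2 := hv w0
    rw [hDα, hDα, hus, EReal.coe_one, one_mul, one_mul, EReal.coe_add_top] at h2
    have hw0' : J w0 = ((J w0).toReal : EReal) := (EReal.coe_toReal hw0 (hbot w0)).symm
    rw [hw0', top_le_iff] at h2
    norm_cast at h2
    exact (EReal.coe_ne_top _) h2
  set a : ℝ := (J us).toReal with ha'
  have ha : J us = (a : EReal) := (EReal.coe_toReal hfin (hbot us)).symm
  refine ⟨vα - F us, fun w => ?_⟩
  by_cases hw : J w = ⊤
  · rw [hw]; exact le_top
  set b : ℝ := (J w).toReal with hb'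
  have hb : J w = (b : EReal) := (EReal.coe_toReal hw (hbot w)).symm
  rw [ha, hb]
  norm_cast
  -- key real inequality: for all t ∈ (0,1]
  set x : V := F us - vα with hx
  set y : V := F w - F us with hy
  have hR : ∀ t : ℝ, 0 < t → t ≤ 1 →
      a ≤ t * b + (1 - t) * a + t * ⟪x, y⟫ + t ^ 2 * ((1/2) * ‖y‖ ^ 2) := by
    intro t ht ht1
    have hc := hconv w us t ht.le ht1
    rw [ha, hb] at hc
    norm_cast at hc
    have hm := hv (t • w + (1 - t) • us)
    rw [hDα, hDα, EReal.coe_one, one_mul, one_mul, ha] at hm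
    have hm2 : (((1/2) * ‖F us - vα‖ ^ 2 : ℝ) : EReal) + (a : EReal) ≤
        (((1/2) * ‖F (t • w + (1 - t) • us) - vα‖ ^ 2 : ℝ) : EReal) +
          ((t * b + (1 - t) * a : ℝ) : EReal) :=
      le_trans hm (add_le_add le_rfl hc)
    norm_cast at hm2
    have e4 : F (t • w + (1 - t) • us) - vα = x + t • y := by
      simp only [map_add, map_smul, hx, hy]
      rw [smul_sub]
      module
    rw [e4, norm_add_sq_real, real_inner_smul_right, norm_smul, Real.norm_eq_abs] at hm2
    nlinarith [sq_abs t]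
  have hkey : a - b - ⟪x, y⟫ ≤ 0 := by
    have := le_of_forall_pos_le_add (a := a - b - ⟪x, y⟫) (b := 0) ?_
    · exact this
    intro ε hε
    set c : ℝ := (1/2) * ‖y‖ ^ 2 with hc'
    have hc0 : 0 ≤ c := by positivity
    set t : ℝ := min 1 (ε / (c + 1)) with ht'
    have ht : 0 < t := lt_min one_pos (by positivity)
    have ht1 : t ≤ 1 := min_le_left _ _
    have h1 := hR t ht ht1
    have h2 : t * (a - b - ⟪x, y⟫) ≤ t ^ 2 * c := by nlinarith
    have h3 : a - b - ⟪x, y⟫ ≤ t * c := by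
      rw [pow_two] at h2
      nlinarith
    have h4 : t * c ≤ ε := by
      have : t ≤ ε / (c + 1) := min_le_right _ _
      have h5 : t * c ≤ (ε / (c + 1)) * c := by nlinarith
      have h6 : (ε / (c + 1)) * c ≤ ε := by
        rw [div_mul_eq_mul_div, div_le_iff₀ (by positivity)]
        nlinarith
      linarith
    linarith
  -- conclude
  have e5 : ⟪(ContinuousLinearMap.adjoint F) (vα - F us), w - us⟫ = -⟪x, y⟫ := by
    rw [ContinuousLinearMap.adjoint_inner_left, map_sub, hx, hy]
    rw [show vα - F us = -(F us - vα) by abel, inner_neg_left]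
  rw [e5]
  linarith
end

section
/- Rescaled Γ-convergence liminf inequality: let vₙ → v* in V, αₙ → 0 with αₙ > 0 and ‖vₙ − v*‖²/αₙ → 0, and E_{αₙ}(u) = ‖Fu − vₙ‖²/(2αₙ) + J(u). If uₙ converges to u (with F sequentially continuous and J sequentially lower semicontinuous along this convergence) and liminf E_{αₙ}(uₙ) < ∞, then Fu = v* and liminf E_{αₙ}(uₙ) ≥ J(u). -/
open Filter

theorem stmt11 {U V : Type*} [NormedAddCommGroup U] [Module ℝ U]
    [NormedAddCommGroup V] [NormedSpace ℝ V]
    (F : U →ₗ[ℝ] V) (J : U → EReal)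
    (hJnonneg : ∀ u, 0 ≤ J u) (hJproper : ∃ u, J u ≠ ⊤)
    (vs : V) (v : ℕ → V) (α : ℕ → ℝ) (hα : ∀ n, 0 < α n)
    (hv : Tendsto v atTop (nhds vs))
    (hαto0 : Tendsto α atTop (nhds 0))
    (hrate : Tendsto (fun n => ‖v n - vs‖ ^ 2 / α n) atTop (nhds 0))
    (u : ℕ → U) (ulim : U)
    (hFu : Tendsto (fun n => F (u n)) atTop (nhds (F ulim)))
    (hJlsc : J ulim ≤ liminf (fun n => J (u n)) atTop)
    (hfin : liminf (fun n =>
        ((‖F (u n) - v n‖ ^ 2 / (2 * α n) : ℝ) : EReal) + J (u n)) atTop < ⊤) :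
    F ulim = vs ∧
      J ulim ≤ liminf (fun n =>
        ((‖F (u n) - v n‖ ^ 2 / (2 * α n) : ℝ) : EReal) + J (u n)) atTop := by
  have key2 : J ulim ≤ liminf (fun n =>
      ((‖F (u n) - v n‖ ^ 2 / (2 * α n) : ℝ) : EReal) + J (u n)) atTop := by
    refine hJlsc.trans (liminf_le_liminf ?_)
    refine Eventually.of_forall fun n => ?_
    have h0 : (0 : EReal) ≤ ((‖F (u n) - v n‖ ^ 2 / (2 * α n) : ℝ) : EReal) := by
      exact_mod_cast div_nonneg (sq_nonneg _) (by linarith [hα n])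
    calc J (u n) = 0 + J (u n) := (zero_add _).symm
    _ ≤ _ := add_le_add_left h0 _
  refine ⟨?_, key2⟩
  by_contra hne
  have hc : 0 < ‖F ulim - vs‖ := by
    simpa [norm_pos_iff, sub_eq_zero] using hne
  -- ‖F uₙ - vₙ‖ → ‖F ulim - vs‖
  have hnorm : Tendsto (fun n => ‖F (u n) - v n‖) atTop (nhds ‖F ulim - vs‖) :=
    (hFu.sub hv).norm
  have hsq : Tendsto (fun n => ‖F (u n) - v n‖ ^ 2) atTop (nhds (‖F ulim - vs‖ ^ 2)) :=
    hnorm.pow 2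
  have hinv : Tendsto (fun n => (2 * α n)⁻¹) atTop atTop := by
    apply Filter.Tendsto.inv_tendsto_nhdsGT_zero
    rw [tendsto_nhdsWithin_iff]
    constructor
    · simpa using hαto0.const_mul 2
    · exact Eventually.of_forall fun n => Set.mem_Ioi.mpr (by linarith [hα n])
  have hdiv : Tendsto (fun n => ‖F (u n) - v n‖ ^ 2 / (2 * α n)) atTop atTop := by
    simp only [div_eq_mul_inv]
    exact Filter.Tendsto.pos_mul_atTop (by positivity) hsq hinv
  have htop : Tendsto (fun n => ((‖F (u n) - v n‖ ^ 2 / (2 * α n) : ℝ) : EReal))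
      atTop (nhds ⊤) := by
    rw [EReal.tendsto_nhds_top_iff_real]
    intro x
    filter_upwards [hdiv.eventually_gt_atTop x] with n hn
    exact_mod_cast hn
  have hge : Tendsto (fun n =>
      ((‖F (u n) - v n‖ ^ 2 / (2 * α n) : ℝ) : EReal) + J (u n)) atTop (nhds ⊤) := by
    rw [EReal.tendsto_nhds_top_iff_real] at htop ⊢
    intro x
    filter_upwards [htop x] with n hn
    calc (x : EReal) < _ := hn
    _ ≤ _ := le_add_of_nonneg_right (hJnonneg _)
  rw [hge.liminf_eq] at hfin
  exact lt_irrefl _ hfin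
end

section
/- Higher-order estimate under the stronger source condition: suppose p* = F*Fη* ∈ ∂J(u*) for some η* ∈ U, Fu* = v*, and u_α minimizes ½‖Fu − v‖² + αJ(u). Then d_J^{p*}(u_α, u*) ≤ d_J^{p*}(u* − αη*, u*) + ‖v − v*‖²/(2α). -/
/-!
Compare the minimizer `u_α` with the competitor `u* - α η*`. Minimality bounds `α J(u_α)` by
`α J(u* - α η*)` plus the difference of the two halved squared residuals. Since
`F (u* - α η*) - v = (v* - v) - α F η*` and `p* = F* F η*`, completing the square shows that
this difference is `α ⟨p*, u_α - (u* - α η*)⟩ + ‖v - v*‖² / 2 - ‖F u_α - v + α F η*‖² / 2`.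
Dividing by `α` and subtracting `J(u*) + ⟨p*, · - u*⟩` from both sides gives the estimate;
over `EReal` the infinite values of `J` need only a case check.
-/

open scoped RealInnerProductSpace

theorem EReal.le_add_div_of_add_mul_le {a c : EReal} {α s t : ℝ} (hα : 0 < α)
    (h : (s : EReal) + α * a ≤ t + α * c) : a ≤ c + ((t - s) / α : ℝ) := by
  induction a using EReal.rec with
  | bot => exact bot_le
  | top =>
    induction c using EReal.rec with
    | top => rw [EReal.top_add_coe]
    | bot =>
      rw [EReal.coe_mul_top_of_pos hα, EReal.coe_add_top, top_le_iff,
        EReal.coe_mul_bot_of_pos hα, EReal.add_bot] at h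
      exact absurd h bot_ne_top
    | coe c =>
      rw [EReal.coe_mul_top_of_pos hα, EReal.coe_add_top, top_le_iff, ← EReal.coe_mul,
        ← EReal.coe_add] at h
      exact absurd h (EReal.coe_ne_top _)
  | coe a =>
    induction c using EReal.rec with
    | top => rw [EReal.top_add_coe]; exact le_top
    | bot =>
      rw [EReal.coe_mul_bot_of_pos hα, EReal.add_bot, le_bot_iff, ← EReal.coe_mul,
        ← EReal.coe_add] at h
      exact absurd h (EReal.coe_ne_bot _)
    | coe c =>
      rw [← EReal.coe_mul, ← EReal.coe_mul, ← EReal.coe_add, ← EReal.coe_add,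
        EReal.coe_le_coe_iff] at h
      rw [← EReal.coe_add, EReal.coe_le_coe_iff, ← sub_le_iff_le_add', le_div_iff₀ hα]
      linarith

theorem bregman_le_bregman_add {U : Type*} [NormedAddCommGroup U] [InnerProductSpace ℝ U]
    {J : U → EReal} {p u w w' : U} {K : ℝ}
    (h : J w ≤ J w' + ((⟪p, w - w'⟫ + K : ℝ) : EReal)) :
    bregman J p u w ≤ bregman J p u w' + K := by
  have hsplit : ⟪p, w - u⟫ = ⟪p, w - w'⟫ + ⟪p, w' - u⟫ := by
    rw [← inner_add_right, sub_add_sub_cancel]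
  calc bregman J p u w
      ≤ J w' + ((⟪p, w - w'⟫ + K : ℝ) : EReal) - J u - ((⟪p, w - u⟫ : ℝ) : EReal) :=
        EReal.sub_le_sub (EReal.sub_le_sub h le_rfl) le_rfl
    _ = bregman J p u w' + K := by
      have regroup : ∀ (a b : EReal) (x y : ℝ), a + x + -b + y = a + -b + ((x + y : ℝ) : EReal) := by
        intro a b x y
        rw [EReal.coe_add]
        ac_rfl
      simp only [bregman]
      rw [hsplit]
      simp only [sub_eq_add_neg (a := (_ : EReal)), ← EReal.coe_neg]
      rw [regroup, add_assoc (J w' + -J u), ← EReal.coe_add]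
      congr 2
      ring

theorem half_norm_sub_smul_sq_sub_half_norm_sq_le {V : Type*} [NormedAddCommGroup V]
    [InnerProductSpace ℝ V] (x e q : V) (α : ℝ) :
    (1/2) * ‖e - α • q‖ ^ 2 - (1/2) * ‖x‖ ^ 2 ≤ α * ⟪q, x - e + α • q⟫ + ‖e‖ ^ 2 / 2 := by
  have hsq : 0 ≤ ‖x + α • q‖ ^ 2 := by positivity
  rw [norm_add_sq_real] at hsq
  rw [norm_sub_sq_real]
  simp only [norm_smul, mul_pow, Real.norm_eq_abs, sq_abs, real_inner_smul_right,
    inner_add_right, inner_sub_right, real_inner_comm] at hsq ⊢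
  nlinarith [real_inner_self_eq_norm_sq q]

theorem half_residual_sq_sub_div_le {U V : Type*} [NormedAddCommGroup U] [InnerProductSpace ℝ U]
    [CompleteSpace U] [NormedAddCommGroup V] [InnerProductSpace ℝ V] [CompleteSpace V]
    (F : U →L[ℝ] V) (v : V) (u us η : U) {α : ℝ} (hα : 0 < α) :
    ((1/2) * ‖F (us - α • η) - v‖ ^ 2 - (1/2) * ‖F u - v‖ ^ 2) / α ≤
      ⟪ContinuousLinearMap.adjoint F (F η), u - (us - α • η)⟫ + ‖v - F us‖ ^ 2 / (2 * α) := by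
  have key := half_norm_sub_smul_sq_sub_half_norm_sq_le (F u - v) (F us - v) (F η) α
  rw [div_le_iff₀ hα, ContinuousLinearMap.adjoint_inner_left, norm_sub_rev v]
  calc (1/2) * ‖F (us - α • η) - v‖ ^ 2 - (1/2) * ‖F u - v‖ ^ 2
      = (1/2) * ‖(F us - v) - α • F η‖ ^ 2 - (1/2) * ‖F u - v‖ ^ 2 := by
        rw [map_sub, map_smul, sub_right_comm]
    _ ≤ α * ⟪F η, (F u - v) - (F us - v) + α • F η⟫ + ‖F us - v‖ ^ 2 / 2 := key
    _ = (⟪F η, F (u - (us - α • η))⟫ + ‖F us - v‖ ^ 2 / (2 * α)) * α := by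
        rw [map_sub, map_sub, map_smul, sub_sub_sub_cancel_right, sub_sub_eq_add_sub,
          add_sub_right_comm]
        field_simp

theorem stmt15_general {U V : Type*} [NormedAddCommGroup U] [InnerProductSpace ℝ U] [CompleteSpace U]
    [NormedAddCommGroup V] [InnerProductSpace ℝ V] [CompleteSpace V]
    (F : U →L[ℝ] V) (J : U → EReal)
    (v vs : V) (α : ℝ) (hα : 0 < α)
    (us ηs : U)
    (hdata : F us = vs)
    (uα : U)
    (hmin : ∀ u : U,
      (((1/2) * ‖F uα - v‖ ^ 2 : ℝ) : EReal) + ((α : ℝ) : EReal) * J uα ≤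
        (((1/2) * ‖F u - v‖ ^ 2 : ℝ) : EReal) + ((α : ℝ) : EReal) * J u) :
    bregman J ((ContinuousLinearMap.adjoint F) (F ηs)) us uα ≤
      bregman J ((ContinuousLinearMap.adjoint F) (F ηs)) us (us - α • ηs) +
        ((‖v - vs‖ ^ 2 / (2 * α) : ℝ) : EReal) := by
  subst hdata
  apply bregman_le_bregman_add
  calc J uα ≤ J (us - α • ηs) + (((1/2) * ‖F (us - α • ηs) - v‖ ^ 2 - (1/2) * ‖F uα - v‖ ^ 2) / α
        : ℝ) := EReal.le_add_div_of_add_mul_le hα (hmin (us - α • ηs))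
    _ ≤ _ := by
      gcongr
      exact half_residual_sq_sub_div_le F v uα us ηs hα

theorem stmt15 {U V : Type*} [NormedAddCommGroup U] [InnerProductSpace ℝ U] [CompleteSpace U]
    [NormedAddCommGroup V] [InnerProductSpace ℝ V] [CompleteSpace V]
    (F : U →L[ℝ] V) (J : U → EReal) (hconv : ConvexFn J) (hproper : ProperFn J)
    (v vs : V) (α : ℝ) (hα : 0 < α)
    (us ηs : U)
    (hsrc : IsSubgrad J us ((ContinuousLinearMap.adjoint F) (F ηs)))
    (hdata : F us = vs)
    (uα : U)
    (hmin : ∀ u : U,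
      (((1/2) * ‖F uα - v‖ ^ 2 : ℝ) : EReal) + ((α : ℝ) : EReal) * J uα ≤
        (((1/2) * ‖F u - v‖ ^ 2 : ℝ) : EReal) + ((α : ℝ) : EReal) * J u) :
    bregman J ((ContinuousLinearMap.adjoint F) (F ηs)) us uα ≤
      bregman J ((ContinuousLinearMap.adjoint F) (F ηs)) us (us - α • ηs) +
        ((‖v - vs‖ ^ 2 / (2 * α) : ℝ) : EReal) :=
  stmt15_general F J v vs α hα us ηs hdata uα hmin
end

section
/- Estimate with operator errors: let u_α minimize ½‖F̃u − ṽ‖² + αJ(u) with optimality condition F̃*(F̃u_α − ṽ) + αp_α = 0, p_α ∈ ∂J(u_α), and let u* satisfy p* = F*z* ∈ ∂J(u*). Define the generalization error G(u) = ‖Fu − v‖² − ‖F̃u − ṽ‖² and assume ṽ = F̃u* and v = Fu*. Then ¼‖F(u_α − u*)‖² + α d_J^{p_α,p*}(u_α,u*) ≤ α²‖z*‖² + ½G(u_α), and hence d_J^{p_α,p*}(u_α,u*) ≤ α‖z*‖² + G(u_α)/(2α). -/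
open scoped RealInnerProductSpace

theorem stmt19 {U V V' : Type*} [NormedAddCommGroup U] [InnerProductSpace ℝ U]
    [CompleteSpace U]
    [NormedAddCommGroup V] [InnerProductSpace ℝ V] [CompleteSpace V]
    [NormedAddCommGroup V'] [InnerProductSpace ℝ V'] [CompleteSpace V']
    (F : U →L[ℝ] V) (Ft : U →L[ℝ] V')
    (J : U → EReal) (hconv : ConvexFn J) (hproper : ProperFn J)
    (us : U) (zs : V) (v : V) (vt : V')
    (hsrc : IsSubgrad J us ((ContinuousLinearMap.adjoint F) zs))
    (hv : v = F us) (hvt : vt = Ft us)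
    (α : ℝ) (hα : 0 < α)
    (uα pα : U)
    (hp : IsSubgrad J uα pα)
    (hopt : (ContinuousLinearMap.adjoint Ft) (Ft uα - vt) + α • pα = 0)
    (G : U → ℝ)
    (hG : ∀ w, G w = ‖F w - v‖ ^ 2 - ‖Ft w - vt‖ ^ 2) :
    (1/4) * ‖F (uα - us)‖ ^ 2 +
        α * ⟪pα - (ContinuousLinearMap.adjoint F) zs, uα - us⟫ ≤
      α ^ 2 * ‖zs‖ ^ 2 + (1/2) * G uα ∧
    ⟪pα - (ContinuousLinearMap.adjoint F) zs, uα - us⟫ ≤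
      α * ‖zs‖ ^ 2 + G uα / (2 * α) := by
  have hFe : F uα - v = F (uα - us) := by rw [hv, map_sub]
  have hFte : Ft uα - vt = Ft (uα - us) := by rw [hvt, map_sub]
  set e := uα - us with he
  have h1 : α * ⟪pα, e⟫ = - ‖Ft e‖ ^ 2 := by
    have h := congrArg (fun x => ⟪x, e⟫) hopt
    simp only [inner_add_left, inner_smul_left, hFte, ContinuousLinearMap.adjoint_inner_left,
      real_inner_self_eq_norm_sq, inner_zero_left, starRingEnd_apply, star_trivial] at h
    have : ‖Ft e‖ ^ 2 = ‖Ft e‖ * ‖Ft e‖ := sq (‖Ft e‖) ▸ by ring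
    linarith [h]
  have h2 : ⟪(ContinuousLinearMap.adjoint F) zs, e⟫ = ⟪zs, F e⟫ :=
    ContinuousLinearMap.adjoint_inner_left F e zs
  have hGe : G uα = ‖F e‖ ^ 2 - ‖Ft e‖ ^ 2 := by rw [hG, hFe, hFte]
  have hin : -(‖zs‖ * ‖F e‖) ≤ ⟪zs, F e⟫ := by
    have h := abs_real_inner_le_norm zs (F e)
    linarith [neg_abs_le (⟪zs, F e⟫ : ℝ)]
  have hd : α * ⟪pα - (ContinuousLinearMap.adjoint F) zs, e⟫
      = -‖Ft e‖ ^ 2 - α * ⟪zs, F e⟫ := by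
    rw [inner_sub_left, h2, mul_sub]
    linarith [h1]
  have hnn : (0:ℝ) ≤ (α * ‖zs‖ - ‖F e‖ / 2) ^ 2 := sq_nonneg _
  have key : (1/4) * ‖F e‖ ^ 2 + α * ⟪pα - (ContinuousLinearMap.adjoint F) zs, e⟫
      ≤ α ^ 2 * ‖zs‖ ^ 2 + (1/2) * G uα := by
    rw [hd, hGe]
    nlinarith [sq_nonneg (‖Ft e‖)]
  refine ⟨key, ?_⟩
  have h4 : (0:ℝ) ≤ (1/4) * ‖F e‖ ^ 2 := by positivity
  have h5 : ⟪pα - (ContinuousLinearMap.adjoint F) zs, e⟫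
      ≤ (α ^ 2 * ‖zs‖ ^ 2 + (1/2) * G uα) / α := by
    rw [le_div_iff₀ hα]
    nlinarith [key, h4]
  calc ⟪pα - (ContinuousLinearMap.adjoint F) zs, e⟫
      ≤ (α ^ 2 * ‖zs‖ ^ 2 + (1/2) * G uα) / α := h5
    _ = α * ‖zs‖ ^ 2 + G uα / (2 * α) := by field_simp
end
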